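/- For the dynamical error model with the KYP/SPR conditions and the gradient update law θ̇ = −γ φ̂ e_y, if α ≥ 4‖Pb‖²‖θ*‖²/(λ_min(Q) λ_min(Q̄)), then the state error and regressor-mismatch signals are square integrable: ∫_{t₀}^∞ e(t)ᵀQ e(t) dt ≤ 2 V(t₀) and ∫_{t₀}^∞ φ̃(t)ᵀQ̄ φ̃(t) dt ≤ 2 V(t₀)/α; in particular ∫_{t₀}^∞ ‖e(t)‖² dt ≤ 2 V(t₀)/λ_min(Q) and ∫_{t₀}^∞ ‖φ̃(t)‖² dt ≤ 2 V(t₀)/(α λ_min(Q̄)) (i.e., e, φ̃ ∈ L₂). -/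

import Mathlib

/-!
Along solutions, the gradient law makes the terms in `θ - θ*` cancel in `V̇`, leaving
`V̇ = -eᵀQe + 2 e_y θ*ᵀφ̃ - α φ̃ᵀQ̄φ̃` (the Lyapunov equations and `Pb = cᵀ`). Cauchy–Schwarz
and AM–GM, together with the lower bound on `α`, absorb the cross term into half of the two
negative terms, so `V̇ ≤ -W` with `W = (eᵀQe + α φ̃ᵀQ̄φ̃) / 2`. As `V ≥ 0`, integrating gives
`∫_{t₀}^T W ≤ V(t₀)` for every `T`, so `W` is integrable on `[t₀, ∞)` with `∫ W ≤ V(t₀)`. The four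
bounds follow by comparing each integrand with `W`, and `‖x‖²` with `xᵀQx / λ_min(Q)`.
-/

open Matrix MeasureTheory Set Filter
open scoped MatrixOrder

section Quadratic

variable {ι : Type*} [Fintype ι]

theorem dotProduct_sq_le_dotProduct_self_mul {R : Type*} [CommSemiring R] [LinearOrder R]
    [IsStrictOrderedRing R] [ExistsAddOfLE R] (x y : ι → R) :
    (x ⬝ᵥ y) ^ 2 ≤ (x ⬝ᵥ x) * (y ⬝ᵥ y) := by
  simpa [dotProduct, sq] using Finset.sum_mul_sq_le_sq_mul_sq Finset.univ x y

theorem dotProduct_self_nonneg {R : Type*} [Ring R] [LinearOrder R] [IsStrictOrderedRing R]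
    (x : ι → R) : 0 ≤ x ⬝ᵥ x :=
  Fintype.sum_nonneg fun i => mul_self_nonneg (x i)

theorem Matrix.PosSemidef.dotProduct_mulVec_self_nonneg {M : Matrix ι ι ℝ} (hM : M.PosSemidef)
    (x : ι → ℝ) : 0 ≤ x ⬝ᵥ M *ᵥ x := by
  simpa using hM.dotProduct_mulVec_nonneg x

theorem Matrix.PosDef.exists_pos_mul_dotProduct_self_le [DecidableEq ι] {Q : Matrix ι ι ℝ}
    (hQ : Q.PosDef) : ∃ r > 0, ∀ x : ι → ℝ, r * (x ⬝ᵥ x) ≤ x ⬝ᵥ Q *ᵥ x := by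
  cases isEmpty_or_nonempty ι
  · exact ⟨1, one_pos, fun x => by simp [dotProduct]⟩
  have hQ' := hQ.isStrictlyPositive
  obtain ⟨r, hr, hrQ⟩ :=
    (CFC.exists_pos_algebraMap_le_iff hQ'.isSelfAdjoint).2 fun _ ↦ hQ'.spectrum_pos
  refine ⟨r, hr, fun x => ?_⟩
  have := (Matrix.le_iff.mp hrQ).dotProduct_mulVec_self_nonneg x
  rw [sub_mulVec, dotProduct_sub] at this
  simpa [Algebra.algebraMap_eq_smul_one, smul_mulVec, dotProduct_smul] using this

theorem Matrix.PosDef.pos_of_isGreatest [DecidableEq ι] {Q : Matrix ι ι ℝ} (hQ : Q.PosDef)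
    {lam : ℝ} (h : IsGreatest {r | ∀ x : ι → ℝ, r * (x ⬝ᵥ x) ≤ x ⬝ᵥ Q *ᵥ x} lam) : 0 < lam :=
  let ⟨_, hr, hrQ⟩ := hQ.exists_pos_mul_dotProduct_self_le
  hr.trans_le (h.2 hrQ)

theorem Matrix.IsSymm.dotProduct_mulVec_comm {R : Type*} [CommSemiring R] {P : Matrix ι ι R}
    (hP : P.IsSymm) (x y : ι → R) : x ⬝ᵥ P *ᵥ y = y ⬝ᵥ P *ᵥ x := by
  rw [dotProduct_mulVec, ← mulVec_transpose, hP.eq, dotProduct_comm]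

theorem Matrix.IsSymm.two_mul_dotProduct_mulVec_mulVec_of_lyapunov {R : Type*} [CommRing R]
    {A P Q : Matrix ι ι R} (hP : P.IsSymm) (hL : Aᵀ * P + P * A = -Q) (x : ι → R) :
    2 * (x ⬝ᵥ P *ᵥ (A *ᵥ x)) = -(x ⬝ᵥ Q *ᵥ x) := by
  have h := congrArg (fun M => x ⬝ᵥ M *ᵥ x) hL
  simp only [add_mulVec, neg_mulVec, dotProduct_add, dotProduct_neg, ← mulVec_mulVec] at h
  rw [← h, dotProduct_mulVec x Aᵀ, vecMul_transpose, hP.dotProduct_mulVec_comm (A *ᵥ x)]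
  ring

end Quadratic

section Derivative

variable {ι κ 𝕜 : Type*} [Fintype ι] [NontriviallyNormedField 𝕜]
  {x y : 𝕜 → ι → 𝕜} {x' y' : ι → 𝕜} {t : 𝕜}

theorem HasDerivAt.dotProduct (hx : HasDerivAt x x' t) (hy : HasDerivAt y y' t) :
    HasDerivAt (fun s => x s ⬝ᵥ y s) (x' ⬝ᵥ y t + x t ⬝ᵥ y') t := by
  exact (HasDerivAt.fun_sum (u := Finset.univ) fun i _ =>
    (hasDerivAt_pi.mp hx i).mul (hasDerivAt_pi.mp hy i)).congr_deriv Finset.sum_add_distrib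

theorem HasDerivAt.matrix_mulVec (M : Matrix κ ι 𝕜) (hx : HasDerivAt x x' t) :
    HasDerivAt (fun s => M *ᵥ x s) (M *ᵥ x') t :=
  hasDerivAt_pi.mpr fun i =>
    HasDerivAt.fun_sum fun j _ => (hasDerivAt_pi.mp hx j).const_mul (M i j)

theorem HasDerivAt.dotProduct_mulVec_self {P : Matrix ι ι 𝕜} (hP : P.IsSymm)
    (hx : HasDerivAt x x' t) :
    HasDerivAt (fun s => x s ⬝ᵥ P *ᵥ x s) (2 * (x t ⬝ᵥ P *ᵥ x')) t := by
  convert hx.dotProduct (hx.matrix_mulVec P) using 1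
  rw [hP.dotProduct_mulVec_comm x']
  ring

end Derivative

section Integral

theorem integrableOn_Ici_and_integral_le_of_intervalIntegral_le {f : ℝ → ℝ} {a C : ℝ}
    (hf : ∀ b, IntegrableOn f (Ioc a b)) (hf₀ : ∀ t, a ≤ t → 0 ≤ f t)
    (hC : ∀ b, a ≤ b → ∫ t in a..b, f t ≤ C) :
    IntegrableOn f (Ici a) ∧ ∫ t in Ici a, f t ≤ C := by
  have hnorm : ∀ b, a ≤ b → ∫ t in a..b, ‖f t‖ = ∫ t in a..b, f t := fun b hb =>
    intervalIntegral.integral_congr fun t ht =>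
      Real.norm_of_nonneg (hf₀ t (by rw [uIcc_of_le hb] at ht; exact ht.1))
  have hIoi : IntegrableOn f (Ioi a) :=
    integrableOn_Ioi_of_intervalIntegral_norm_bounded C a hf tendsto_id
      ((eventually_ge_atTop a).mono fun b hb => (hnorm b hb).trans_le (hC b hb))
  refine ⟨(integrableOn_Ici_iff_integrableOn_Ioi).mpr hIoi, ?_⟩
  rw [integral_Ici_eq_integral_Ioi]
  exact le_of_tendsto (intervalIntegral_tendsto_integral_Ioi a hIoi tendsto_id)
    ((eventually_ge_atTop a).mono hC)

theorem integrableOn_Ici_and_integral_le_of_hasDerivAt_le_neg {V V' W : ℝ → ℝ} {a : ℝ}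
    (hV : ∀ t, a ≤ t → HasDerivAt V (V' t) t) (hV₀ : ∀ t, a ≤ t → 0 ≤ V t)
    (hW : ContinuousOn W (Ici a)) (hW₀ : ∀ t, a ≤ t → 0 ≤ W t)
    (hVW : ∀ t, a ≤ t → V' t ≤ -W t) :
    IntegrableOn W (Ici a) ∧ ∫ t in Ici a, W t ≤ V a := by
  refine integrableOn_Ici_and_integral_le_of_intervalIntegral_le
    (fun b => ((hW.mono Icc_subset_Ici_self).integrableOn_Icc).mono_set Ioc_subset_Icc_self)
    hW₀ fun b hb => ?_
  have := intervalIntegral.integral_le_sub_of_hasDeriv_right_of_le (g := fun t => -V t) hb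
    (fun t ht => (hV t ht.1).continuousAt.neg.continuousWithinAt)
    (fun t ht => (hV t ht.1.le).neg.hasDerivWithinAt)
    ((hW.mono Icc_subset_Ici_self).integrableOn_Icc) fun t ht => by
      simpa using neg_le_neg (hVW t ht.1.le)
  linarith [hV₀ b hb]

theorem integrableOn_and_integral_le_of_le_const_mul {α : Type*} [MeasurableSpace α]
    {μ : Measure α} {s : Set α} {f g : α → ℝ} {κ C : ℝ} (hs : MeasurableSet s)
    (hg : IntegrableOn g s μ) (hgC : ∫ x in s, g x ∂μ ≤ C) (hκ : 0 ≤ κ)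
    (hf : AEStronglyMeasurable f (μ.restrict s)) (hf₀ : ∀ x ∈ s, 0 ≤ f x)
    (hfg : ∀ x ∈ s, f x ≤ κ * g x) :
    IntegrableOn f s μ ∧ ∫ x in s, f x ∂μ ≤ κ * C := by
  have hκg : IntegrableOn (fun x => κ * g x) s μ := hg.const_mul κ
  have hfi : IntegrableOn f s μ := hκg.mono' hf <| (ae_restrict_mem hs).mono fun x hx => by
    rw [Real.norm_of_nonneg (hf₀ x hx)]; exact hfg x hx
  refine ⟨hfi, ?_⟩
  calc ∫ x in s, f x ∂μ ≤ ∫ x in s, κ * g x ∂μ := setIntegral_mono_on hfi hκg hs hfg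
      _ = κ * ∫ x in s, g x ∂μ := integral_const_mul κ _
      _ ≤ κ * C := mul_le_mul_of_nonneg_left hgC hκ

theorem integrableOn_dotProduct_self_and_integral_le_of_quadForm {ι α : Type*} [Fintype ι]
    [MeasurableSpace α] {μ : Measure α} {s : Set α} (hs : MeasurableSet s) {Q : Matrix ι ι ℝ}
    {lam C : ℝ} (hlam : 0 < lam) (hQ : ∀ v, lam * (v ⬝ᵥ v) ≤ v ⬝ᵥ Q *ᵥ v) {x : α → ι → ℝ}
    (hx : AEStronglyMeasurable x (μ.restrict s)) (hxQ : IntegrableOn (fun t => x t ⬝ᵥ Q *ᵥ x t) s μ)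
    (hC : ∫ t in s, x t ⬝ᵥ Q *ᵥ x t ∂μ ≤ C) :
    IntegrableOn (fun t => x t ⬝ᵥ x t) s μ ∧ ∫ t in s, x t ⬝ᵥ x t ∂μ ≤ C / lam := by
  rw [div_eq_inv_mul]
  exact integrableOn_and_integral_le_of_le_const_mul hs hxQ hC (inv_nonneg.2 hlam.le)
    (by fun_prop) (fun t _ => dotProduct_self_nonneg (x t))
    (fun t _ => (le_inv_mul_iff₀ hlam).2 (hQ (x t)))

end Integral

section ErrorModel

variable {ι κ : Type*} [Fintype ι] [Fintype κ]

noncomputable def lyapunovFunction (γ α : ℝ) (P : Matrix ι ι ℝ) (Pbar : Matrix κ κ ℝ) (θerr : κ → ℝ)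
    (e : ι → ℝ) (φtil : κ → ℝ) : ℝ :=
  γ⁻¹ * (θerr ⬝ᵥ θerr) + e ⬝ᵥ P *ᵥ e + α * (φtil ⬝ᵥ Pbar *ᵥ φtil)

theorem lyapunovFunction_nonneg {γ α : ℝ} (hγ : 0 ≤ γ) (hα : 0 ≤ α) {P : Matrix ι ι ℝ}
    {Pbar : Matrix κ κ ℝ} (hP : P.PosSemidef) (hPbar : Pbar.PosSemidef) (θerr : κ → ℝ)
    (e : ι → ℝ) (φtil : κ → ℝ) : 0 ≤ lyapunovFunction γ α P Pbar θerr e φtil := by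
  have := dotProduct_self_nonneg θerr
  have := hP.dotProduct_mulVec_self_nonneg e
  have := hPbar.dotProduct_mulVec_self_nonneg φtil
  unfold lyapunovFunction
  positivity

theorem hasDerivAt_lyapunovFunction {γ α t : ℝ} (hγ : γ ≠ 0)
    {A P Q : Matrix ι ι ℝ} (hP : P.IsSymm) (hL : Aᵀ * P + P * A = -Q) {b c : ι → ℝ}
    (hPb : P *ᵥ b = c) {Λ Pbar Qbar : Matrix κ κ ℝ} (hPbar : Pbar.IsSymm)
    (hLbar : Λᵀ * Pbar + Pbar * Λ = -Qbar)
    {θstar : κ → ℝ} {e : ℝ → ι → ℝ} {θ φhat φtil : ℝ → κ → ℝ}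
    (he : HasDerivAt e (A *ᵥ e t + ((θ t - θstar) ⬝ᵥ φhat t) • b + (θstar ⬝ᵥ φtil t) • b) t)
    (hφ : HasDerivAt φtil (Λ *ᵥ φtil t) t)
    (hθ : HasDerivAt θ (-(γ * (c ⬝ᵥ e t)) • φhat t) t) :
    HasDerivAt (fun s => lyapunovFunction γ α P Pbar (θ s - θstar) (e s) (φtil s))
      (-(e t ⬝ᵥ Q *ᵥ e t) + 2 * ((θstar ⬝ᵥ φtil t) * (c ⬝ᵥ e t))
        - α * (φtil t ⬝ᵥ Qbar *ᵥ φtil t)) t := by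
  have hθ' := hθ.sub_const θstar
  refine ((((hθ'.dotProduct hθ').const_mul γ⁻¹).add (he.dotProduct_mulVec_self hP)).add
    ((hφ.dotProduct_mulVec_self hPbar).const_mul α)).congr_deriv ?_
  have hLe := hP.two_mul_dotProduct_mulVec_mulVec_of_lyapunov hL (e t)
  have hLφ := hPbar.two_mul_dotProduct_mulVec_mulVec_of_lyapunov hLbar (φtil t)
  have hc : e t ⬝ᵥ P *ᵥ b = c ⬝ᵥ e t := by rw [hPb, dotProduct_comm]
  simp only [mulVec_add, mulVec_smul, dotProduct_add, dotProduct_smul, smul_dotProduct,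
    smul_eq_mul, dotProduct_comm (φhat t), hc]
  field_simp
  linear_combination hLe + α * hLφ

theorem four_mul_dotProduct_mul_dotProduct_le {Q : Matrix ι ι ℝ} {Qbar : Matrix κ κ ℝ}
    {lam lam' α : ℝ} (hlam : 0 < lam) (hlam' : 0 < lam')
    (hQ : ∀ x, lam * (x ⬝ᵥ x) ≤ x ⬝ᵥ Q *ᵥ x) (hQbar : ∀ y, lam' * (y ⬝ᵥ y) ≤ y ⬝ᵥ Qbar *ᵥ y)
    {p : ι → ℝ} {θ : κ → ℝ} (hα : 4 * (p ⬝ᵥ p) * (θ ⬝ᵥ θ) / (lam * lam') ≤ α)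
    (x : ι → ℝ) (y : κ → ℝ) :
    4 * ((θ ⬝ᵥ y) * (p ⬝ᵥ x)) ≤ x ⬝ᵥ Q *ᵥ x + α * (y ⬝ᵥ Qbar *ᵥ y) := by
  have hpp := dotProduct_self_nonneg p
  have hθθ := dotProduct_self_nonneg θ
  have hxx := dotProduct_self_nonneg x
  have hyy := dotProduct_self_nonneg y
  have hα' : 4 * (p ⬝ᵥ p) * (θ ⬝ᵥ θ) ≤ α * (lam * lam') := (div_le_iff₀ (by positivity)).1 hα
  have hα₀ : 0 ≤ α := by nlinarith [mul_pos hlam hlam']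
  have hQx : 0 ≤ x ⬝ᵥ Q *ᵥ x := (mul_nonneg hlam.le hxx).trans (hQ x)
  have hQy : 0 ≤ y ⬝ᵥ Qbar *ᵥ y := (mul_nonneg hlam'.le hyy).trans (hQbar y)
  refine le_of_eq_of_le (by ring) (two_mul_le_add_of_sq_le_mul
    (r := 2 * ((θ ⬝ᵥ y) * (p ⬝ᵥ x))) hQx (mul_nonneg hα₀ hQy) ?_)
  calc (2 * ((θ ⬝ᵥ y) * (p ⬝ᵥ x))) ^ 2 = 4 * (θ ⬝ᵥ y) ^ 2 * (p ⬝ᵥ x) ^ 2 := by ring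
    _ ≤ 4 * ((θ ⬝ᵥ θ) * (y ⬝ᵥ y)) * ((p ⬝ᵥ p) * (x ⬝ᵥ x)) := by
      gcongr
      exacts [dotProduct_sq_le_dotProduct_self_mul θ y, dotProduct_sq_le_dotProduct_self_mul p x]
    _ = 4 * (p ⬝ᵥ p) * (θ ⬝ᵥ θ) * ((x ⬝ᵥ x) * (y ⬝ᵥ y)) := by ring
    _ ≤ α * (lam * lam') * ((x ⬝ᵥ x) * (y ⬝ᵥ y)) := by gcongr
    _ = α * ((lam * (x ⬝ᵥ x)) * (lam' * (y ⬝ᵥ y))) := by ring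
    _ ≤ α * ((x ⬝ᵥ Q *ᵥ x) * (y ⬝ᵥ Qbar *ᵥ y)) := by gcongr; exacts [hQ x, hQbar y]
    _ = (x ⬝ᵥ Q *ᵥ x) * (α * (y ⬝ᵥ Qbar *ᵥ y)) := by ring

end ErrorModel

theorem kyp_state_error_square_integrable_general
    {n N : ℕ} (t₀ γ α : ℝ) (hγ : 0 < γ) (hα : 0 < α)
    (A : Matrix (Fin n) (Fin n) ℝ) (b c : Fin n → ℝ)
    (P Q : Matrix (Fin n) (Fin n) ℝ)
    (hPsym : P.IsSymm) (hP : P.PosDef) (hQ : Q.PosDef)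
    (hLyap : Aᵀ * P + P * A = -Q) (hPb : P.mulVec b = c)
    (Λ Pbar Qbar : Matrix (Fin N) (Fin N) ℝ)
    (hPbarSym : Pbar.IsSymm) (hPbar : Pbar.PosDef)
    (hQbar : Qbar.PosDef)
    (hLyapBar : Λᵀ * Pbar + Pbar * Λ = -Qbar)
    (lamQ lamQbar : ℝ)
    (hlamQ : IsGreatest {r : ℝ | ∀ x : Fin n → ℝ, r * (x ⬝ᵥ x) ≤ x ⬝ᵥ Q.mulVec x} lamQ)
    (hlamQbar : IsGreatest
      {r : ℝ | ∀ x : Fin N → ℝ, r * (x ⬝ᵥ x) ≤ x ⬝ᵥ Qbar.mulVec x} lamQbar)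
    (θstar : Fin N → ℝ)
    (hαbig : 4 * (P.mulVec b ⬝ᵥ P.mulVec b) * (θstar ⬝ᵥ θstar) / (lamQ * lamQbar) ≤ α)
    (e : ℝ → Fin n → ℝ) (θ φhat φtil : ℝ → Fin N → ℝ)
    (ey : ℝ → ℝ) (hey : ∀ t, ey t = c ⬝ᵥ e t)
    (hde : ∀ t, t₀ ≤ t → HasDerivAt e
      (A.mulVec (e t) + ((θ t - θstar) ⬝ᵥ φhat t) • b + (θstar ⬝ᵥ φtil t) • b) t)
    (hdφ : ∀ t, t₀ ≤ t → HasDerivAt φtil (Λ.mulVec (φtil t)) t)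
    (hdθ : ∀ t, t₀ ≤ t → HasDerivAt θ ((-(γ * ey t)) • φhat t) t)
    (V : ℝ → ℝ)
    (hV : ∀ t, V t = γ⁻¹ * ((θ t - θstar) ⬝ᵥ (θ t - θstar))
      + e t ⬝ᵥ P.mulVec (e t) + α * (φtil t ⬝ᵥ Pbar.mulVec (φtil t))) :
    (MeasureTheory.IntegrableOn (fun t => e t ⬝ᵥ Q.mulVec (e t)) (Set.Ici t₀) ∧
      ∫ t in Set.Ici t₀, e t ⬝ᵥ Q.mulVec (e t) ≤ 2 * V t₀) ∧
    (MeasureTheory.IntegrableOn (fun t => φtil t ⬝ᵥ Qbar.mulVec (φtil t)) (Set.Ici t₀) ∧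
      ∫ t in Set.Ici t₀, φtil t ⬝ᵥ Qbar.mulVec (φtil t) ≤ 2 * V t₀ / α) ∧
    (MeasureTheory.IntegrableOn (fun t => e t ⬝ᵥ e t) (Set.Ici t₀) ∧
      ∫ t in Set.Ici t₀, e t ⬝ᵥ e t ≤ 2 * V t₀ / lamQ) ∧
    (MeasureTheory.IntegrableOn (fun t => φtil t ⬝ᵥ φtil t) (Set.Ici t₀) ∧
      ∫ t in Set.Ici t₀, φtil t ⬝ᵥ φtil t ≤ 2 * V t₀ / (α * lamQbar)) := by
  have hVeq : V = fun t => lyapunovFunction γ α P Pbar (θ t - θstar) (e t) (φtil t) :=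
    funext hV
  have hlamQ₀ := hQ.pos_of_isGreatest hlamQ
  have hlamQbar₀ := hQbar.pos_of_isGreatest hlamQbar
  have hQe (t : ℝ) := hQ.posSemidef.dotProduct_mulVec_self_nonneg (e t)
  have hQφ (t : ℝ) := hQbar.posSemidef.dotProduct_mulVec_self_nonneg (φtil t)
  have hce : ContinuousOn e (Set.Ici t₀) := fun t ht => (hde t ht).continuousAt.continuousWithinAt
  have hcφ : ContinuousOn φtil (Set.Ici t₀) := fun t ht =>
    (hdφ t ht).continuousAt.continuousWithinAt
  have hme := hce.aestronglyMeasurable (μ := volume) measurableSet_Ici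
  have hmφ := hcφ.aestronglyMeasurable (μ := volume) measurableSet_Ici
  obtain ⟨hWint, hWle⟩ := integrableOn_Ici_and_integral_le_of_hasDerivAt_le_neg
    (W := fun t => (e t ⬝ᵥ Q *ᵥ e t + α * (φtil t ⬝ᵥ Qbar *ᵥ φtil t)) / 2)
    (fun t ht => hVeq ▸ hasDerivAt_lyapunovFunction hγ.ne' hPsym hLyap hPb hPbarSym
      hLyapBar (hde t ht) (hdφ t ht) (hey t ▸ hdθ t ht))
    (fun t _ => hVeq ▸ lyapunovFunction_nonneg hγ.le hα.le hP.posSemidef hPbar.posSemidef _ _ _)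
    (by fun_prop)
    (fun t _ => by have := hQe t; have := hQφ t; positivity)
    (fun t _ => by
      linarith [four_mul_dotProduct_mul_dotProduct_le hlamQ₀ hlamQbar₀ hlamQ.1 hlamQbar.1
        (hPb ▸ hαbig) (e t) (φtil t)])
  obtain ⟨hQe_int, hQe_le⟩ := integrableOn_and_integral_le_of_le_const_mul measurableSet_Ici
    hWint hWle zero_le_two (by fun_prop) (fun t _ => hQe t)
    (fun t _ => by linarith [mul_nonneg hα.le (hQφ t)])
  obtain ⟨hQφ_int, hQφ_le⟩ := integrableOn_and_integral_le_of_le_const_mul measurableSet_Ici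
    hWint hWle (by positivity : 0 ≤ 2 / α) (by fun_prop) (fun t _ => hQφ t)
    (fun t _ => by field_simp; linarith [hQe t])
  rw [div_mul_eq_mul_div] at hQφ_le
  refine ⟨⟨hQe_int, hQe_le⟩, ⟨hQφ_int, hQφ_le⟩,
    integrableOn_dotProduct_self_and_integral_le_of_quadForm measurableSet_Ici hlamQ₀ hlamQ.1
      hme hQe_int hQe_le, ?_⟩
  simpa only [div_div] using integrableOn_dotProduct_self_and_integral_le_of_quadForm
    measurableSet_Ici hlamQbar₀ hlamQbar.1 hmφ hQφ_int hQφ_le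

/-- For the dynamical error model with the KYP/SPR conditions and the gradient
update law `θ̇ = -γ φ̂ e_y`, if `α ≥ 4‖Pb‖²‖θ*‖²/(λ_min(Q) λ_min(Q̄))`, then the
state error and regressor-mismatch signals are square integrable:
`∫_{t₀}^∞ eᵀQe ≤ 2V(t₀)`, `∫_{t₀}^∞ φ̃ᵀQ̄φ̃ ≤ 2V(t₀)/α`; in particular
`∫_{t₀}^∞ ‖e‖² ≤ 2V(t₀)/λ_min(Q)` and `∫_{t₀}^∞ ‖φ̃‖² ≤ 2V(t₀)/(α λ_min(Q̄))`
(i.e. `e, φ̃ ∈ L₂`). -/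
theorem kyp_state_error_square_integrable
    {n N : ℕ} (t₀ γ α : ℝ) (hγ : 0 < γ) (hα : 0 < α)
    (A : Matrix (Fin n) (Fin n) ℝ) (b c : Fin n → ℝ)
    (P Q : Matrix (Fin n) (Fin n) ℝ)
    (hPsym : P.IsSymm) (hP : P.PosDef) (hQsym : Q.IsSymm) (hQ : Q.PosDef)
    (hLyap : Aᵀ * P + P * A = -Q) (hPb : P.mulVec b = c)
    (Λ Pbar Qbar : Matrix (Fin N) (Fin N) ℝ)
    (hPbarSym : Pbar.IsSymm) (hPbar : Pbar.PosDef)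
    (hQbarSym : Qbar.IsSymm) (hQbar : Qbar.PosDef)
    (hLyapBar : Λᵀ * Pbar + Pbar * Λ = -Qbar)
    (lamQ lamQbar : ℝ)
    (hlamQ : IsGreatest {r : ℝ | ∀ x : Fin n → ℝ, r * (x ⬝ᵥ x) ≤ x ⬝ᵥ Q.mulVec x} lamQ)
    (hlamQbar : IsGreatest
      {r : ℝ | ∀ x : Fin N → ℝ, r * (x ⬝ᵥ x) ≤ x ⬝ᵥ Qbar.mulVec x} lamQbar)
    (θstar : Fin N → ℝ)
    (hαbig : 4 * (P.mulVec b ⬝ᵥ P.mulVec b) * (θstar ⬝ᵥ θstar) / (lamQ * lamQbar) ≤ α)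
    (e : ℝ → Fin n → ℝ) (θ φhat φtil : ℝ → Fin N → ℝ)
    (ey : ℝ → ℝ) (hey : ∀ t, ey t = c ⬝ᵥ e t)
    (hde : ∀ t, t₀ ≤ t → HasDerivAt e
      (A.mulVec (e t) + ((θ t - θstar) ⬝ᵥ φhat t) • b + (θstar ⬝ᵥ φtil t) • b) t)
    (hdφ : ∀ t, t₀ ≤ t → HasDerivAt φtil (Λ.mulVec (φtil t)) t)
    (hdθ : ∀ t, t₀ ≤ t → HasDerivAt θ ((-(γ * ey t)) • φhat t) t)
    (V : ℝ → ℝ)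
    (hV : ∀ t, V t = γ⁻¹ * ((θ t - θstar) ⬝ᵥ (θ t - θstar))
      + e t ⬝ᵥ P.mulVec (e t) + α * (φtil t ⬝ᵥ Pbar.mulVec (φtil t))) :
    (MeasureTheory.IntegrableOn (fun t => e t ⬝ᵥ Q.mulVec (e t)) (Set.Ici t₀) ∧
      ∫ t in Set.Ici t₀, e t ⬝ᵥ Q.mulVec (e t) ≤ 2 * V t₀) ∧
    (MeasureTheory.IntegrableOn (fun t => φtil t ⬝ᵥ Qbar.mulVec (φtil t)) (Set.Ici t₀) ∧
      ∫ t in Set.Ici t₀, φtil t ⬝ᵥ Qbar.mulVec (φtil t) ≤ 2 * V t₀ / α) ∧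
    (MeasureTheory.IntegrableOn (fun t => e t ⬝ᵥ e t) (Set.Ici t₀) ∧
      ∫ t in Set.Ici t₀, e t ⬝ᵥ e t ≤ 2 * V t₀ / lamQ) ∧
    (MeasureTheory.IntegrableOn (fun t => φtil t ⬝ᵥ φtil t) (Set.Ici t₀) ∧
      ∫ t in Set.Ici t₀, φtil t ⬝ᵥ φtil t ≤ 2 * V t₀ / (α * lamQbar)) :=
  kyp_state_error_square_integrable_general t₀ γ α hγ hα A b c P Q hPsym hP hQ hLyap hPb Λ Pbar Qbar
    hPbarSym hPbar hQbar hLyapBar lamQ lamQbar hlamQ hlamQbar θstar hαbig e θ φhat φtil ey hey hde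
    hdφ hdθ V hV
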